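/- With φ as above, Φ₂(ω) = Ψ(φ(ω)) for every binary word ω, where Φ₂ is the second fundamental Foata transformation on binary words and Ψ the inverse first Foata transformation. Consequently, Ψ(ω) = Φ₂(ω) for every ω in the fixed-point set H = {ω = 1^{m_0} 2^{n_0} ⋯ 1^{m_d} 2^{n_d} : m_0 = m_d − 1 and m_i = m_{d−i} for 1 ≤ i ≤ d−1}. -/

import Mathlib

/-- Count the leading letters of a list equal to `a`; return the count and the rest. -/
def leadCount (a : ℕ) : List ℕ → ℕ × List ℕ
  | [] => (0, [])
  | b :: rest =>
    if b = a then
      let p := leadCount a rest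
      (p.1 + 1, p.2)
    else (0, b :: rest)

def blocksAux : ℕ → List ℕ → List (ℕ × ℕ)
  | 0, _ => []
  | _, [] => []
  | fuel + 1, w =>
    let p := leadCount 1 w
    let q := leadCount 2 p.2
    (p.1, q.1) :: blocksAux fuel q.2

/-- The descent-block decomposition `[(m₀,n₀),…,(m_d,n_d)]` of a binary word
`1^{m₀} 2^{n₀} ⋯ 1^{m_d} 2^{n_d}`. -/
def blocks (w : List ℕ) : List (ℕ × ℕ) := blocksAux w.length w

/-- The word `1^{m₀} 2^{n₀} ⋯ 1^{m_d} 2^{n_d}` determined by blocks. -/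
def blockWord (bs : List (ℕ × ℕ)) : List ℕ :=
  bs.flatMap fun p => List.replicate p.1 1 ++ List.replicate p.2 2

/-- `[(m₀,n₀),…,(m_d,n_d)]` is a valid descent-block decomposition:
`m_i > 0` for `1 ≤ i ≤ d` and `n_j > 0` for `0 ≤ j ≤ d-1`. -/
def ValidBlocks (bs : List (ℕ × ℕ)) : Prop :=
  bs ≠ [] ∧ (∀ p ∈ bs.tail, 0 < p.1) ∧ (∀ p ∈ bs.dropLast, 0 < p.2)

/-- A word on the alphabet {1,2}. -/
def IsBinary (w : List ℕ) : Prop := ∀ a ∈ w, a = 1 ∨ a = 2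

/-- The descent number of a word. -/
def des (w : List ℕ) : ℕ := (w.zip w.tail).countP fun p => decide (p.2 < p.1)

/-- The excedance number of a binary word with `k` ones: the number of
positions `i ≤ k` carrying the letter 2. -/
def exc (w : List ℕ) : ℕ := (w.take (w.count 1)).count 2

/-- `Ψ = Φ₁⁻¹` on binary words, via the descent-block decomposition. -/
def psiBlocks (bs : List (ℕ × ℕ)) : List ℕ :=
  List.replicate (bs.headD (0,0)).1 1
    ++ bs.tail.flatMap (fun p => 2 :: List.replicate (p.1 - 1) 1)
    ++ bs.dropLast.flatMap (fun p => List.replicate (p.2 - 1) 2 ++ [1])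
    ++ List.replicate (bs.getLastD (0,0)).2 2

def Psi (w : List ℕ) : List ℕ := psiBlocks (blocks w)

/-- Foata's second fundamental transformation on binary words. -/
def phi2Blocks (bs : List (ℕ × ℕ)) : List ℕ :=
  bs.tail.reverse.flatMap (fun p => List.replicate (p.1 - 1) 1 ++ [2])
    ++ List.replicate (bs.headD (0,0)).1 1
    ++ bs.dropLast.flatMap (fun p => List.replicate (p.2 - 1) 2 ++ [1])
    ++ List.replicate (bs.getLastD (0,0)).2 2

def Phi2 (w : List ℕ) : List ℕ := phi2Blocks (blocks w)

/-- The extended Steingrímsson map `Γ` on binary words. -/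
def gammaBlocks (bs : List (ℕ × ℕ)) : List ℕ :=
  match bs with
  | [] => []
  | [(m0, n0)] => List.replicate m0 1 ++ List.replicate n0 2
  | (m0, n0) :: rest =>
      List.replicate m0 1
        ++ rest.dropLast.flatMap (fun p => 2 :: List.replicate (p.1 - 1) 1)
        ++ (2 :: List.replicate (rest.getLastD (0,0)).1 1)
        ++ (let ns := n0 :: rest.map Prod.snd
            ns.dropLast.dropLast.flatMap (fun nj => List.replicate (nj - 1) 2 ++ [1])
              ++ List.replicate (ns.dropLast.getLastD 0 - 1 + ns.getLastD 0) 2)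

def Gamma (w : List ℕ) : List ℕ := gammaBlocks (blocks w)

/-- The involution `φ` on binary words. -/
def phi (w : List ℕ) : List ℕ :=
  let bs := blocks w
  let ns := bs.map Prod.snd
  let newms : List ℕ :=
    match (bs.map Prod.fst).reverse with
    | [] => []
    | [a] => [a]
    | a :: rest => (a - 1) :: (rest.dropLast ++ [rest.getLastD 0 + 1])
  blockWord (newms.zip ns)

/-- Fibonacci words: binary words with no two consecutive ones. -/
def IsFib (w : List ℕ) : Prop :=
  IsBinary w ∧ w.Chain' fun a b => ¬(a = 1 ∧ b = 1)

def FibSet (n : ℕ) : Set (List ℕ) := {w | IsFib w ∧ w.length = n}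

/-- Fibonacci words of length `n` ending with the letter 1. -/
def FibSet' (n : ℕ) : Set (List ℕ) :=
  {w | IsFib w ∧ w.length = n ∧ w.getLast? = some 1}

/-- Binary words of length `n` with no two consecutive twos. -/
def GSet (n : ℕ) : Set (List ℕ) :=
  {w | IsBinary w ∧ w.length = n ∧ w.Chain' fun a b => ¬(a = 2 ∧ b = 2)}

/-- The word `1^{m₀} 2^{d+n₀-1} 1 2^{n₁-1} ⋯ 1 2^{n_{d-1}-1} 1 2^{n_d}`. -/
def Rword (m0 : ℕ) (ns : List ℕ) : List ℕ :=
  match ns with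
  | [] => List.replicate m0 1
  | [n0] => List.replicate m0 1 ++ List.replicate n0 2
  | n0 :: rest =>
      List.replicate m0 1 ++ List.replicate (rest.length + n0 - 1) 2
        ++ rest.dropLast.flatMap (fun nj => 1 :: List.replicate (nj - 1) 2)
        ++ (1 :: List.replicate (rest.getLastD 0) 2)

def RSet (n : ℕ) : Set (List ℕ) :=
  {w | ∃ m0 ns, m0 ≤ 1 ∧ ns ≠ [] ∧ (∀ j ∈ List.dropLast ns, 1 ≤ j) ∧
        w = Rword m0 ns ∧ w.length = n}

/-- The Fibonacci word `1^{m₀} 2^{n₀} 1 2^{n₁} ⋯ 1 2^{n_d}`. -/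
def Fword (m0 : ℕ) (ns : List ℕ) : List ℕ :=
  List.replicate m0 1 ++ List.replicate (ns.headD 0) 2
    ++ ns.tail.flatMap fun nj => 1 :: List.replicate nj 2

/-
In the descent-block form `(m₀,n₀) ⋯ (m_d,n_d)`, φ keeps every `n_j`, reverses the inner
lengths `m₁, …, m_{d-1}` and replaces the outer ones by `m_d - 1` and `m₀ + 1`. The block formula
for Ψ applied to these blocks then reads `1^{m_d-1} 2 1^{m_{d-1}-1} 2 ⋯ 2 1^{m₁-1} 2 1^{m₀}`
followed by the 2-runs of ω, which is the block formula for Φ₂(ω). What needs care is that the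
blocks of φ(ω) really are these, i.e. that `blocks` inverts `blockWord` on valid decompositions
and that φ preserves validity. On H the blocks are fixed by φ, so Ψ(ω) = Ψ(φ(ω)) = Φ₂(ω).
-/

lemma List.dropLast_cons_append_singleton {α : Type*} (a b : α) (l : List α) :
    (a :: (l ++ [b])).dropLast = a :: l :=
  List.dropLast_concat (l₁ := a :: l)

lemma List.getLastD_cons_append_singleton {α : Type*} (a b d : α) (l : List α) :
    (a :: (l ++ [b])).getLastD d = b :=
  List.getLastD_concat (l := a :: l)

lemma List.flatMap_zip_fst {α β γ : Type*} {l₁ : List α} {l₂ : List β}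
    (h : l₁.length ≤ l₂.length) (f : α → List γ) :
    (l₁.zip l₂).flatMap (fun p => f p.1) = l₁.flatMap f := by
  rw [← List.flatMap_map, List.map_fst_zip h]

lemma List.flatMap_zip_snd {α β γ : Type*} {l₁ : List α} {l₂ : List β}
    (h : l₂.length ≤ l₁.length) (f : β → List γ) :
    (l₁.zip l₂).flatMap (fun p => f p.2) = l₂.flatMap f := by
  rw [← List.flatMap_map, List.map_snd_zip h]

lemma List.flatMap_cons_append_singleton {α β : Type*} (l : List α) (f : α → List β) (x : β) :
    l.flatMap (fun a => x :: f a) ++ [x] = x :: l.flatMap (fun a => f a ++ [x]) := by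
  induction l with
  | nil => rfl
  | cons a l ih => simp [ih]

lemma List.reverse_eq_self_of_getD {α : Type*} {a b d : α} {l : List α}
    (h : ∀ i, 1 ≤ i → i ≤ (a :: (l ++ [b])).length - 1 - 1 →
      (a :: (l ++ [b])).getD i d = (a :: (l ++ [b])).getD ((a :: (l ++ [b])).length - 1 - i) d) :
    l.reverse = l := by
  refine List.ext_getElem (by simp) fun n h₁ h₂ => ?_
  have := h (n + 1) (by omega) (by simp; omega)
  rw [show (a :: (l ++ [b])).length - 1 - (n + 1) = (l.length - 1 - n) + 1 by simp; omega] at this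
  rw [List.getD_cons_succ, List.getD_cons_succ, List.getD_append _ _ _ _ h₂,
    List.getD_append _ _ _ _ (by omega), List.getD_eq_getElem, List.getD_eq_getElem] at this
  rw [List.getElem_reverse]
  exact this.symm

lemma leadCount_replicate_append (a k : ℕ) {l : List ℕ} (h : l.head? ≠ some a) :
    leadCount a (List.replicate k a ++ l) = (k, l) := by
  induction k with
  | zero => cases l <;> simp_all [leadCount]
  | succ k ih => simp [List.replicate_succ, leadCount, ih]

lemma blocksAux_nil (fuel : ℕ) : blocksAux fuel [] = [] := by
  cases fuel <;> rfl

lemma blockWord_cons (m n : ℕ) (bs : List (ℕ × ℕ)) :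
    blockWord ((m, n) :: bs) = List.replicate m 1 ++ List.replicate n 2 ++ blockWord bs := by
  simp [blockWord]

lemma head?_blockWord_cons_of_pos {m : ℕ} (n : ℕ) (bs : List (ℕ × ℕ)) (hm : 0 < m) :
    (blockWord ((m, n) :: bs)).head? = some 1 := by
  obtain ⟨k, rfl⟩ := Nat.exists_eq_succ_of_ne_zero hm.ne'
  simp [blockWord_cons, List.replicate_succ]

lemma validBlocks_singleton (p : ℕ × ℕ) : ValidBlocks [p] := by
  simp [ValidBlocks]

lemma validBlocks_cons_cons {p q : ℕ × ℕ} {bs : List (ℕ × ℕ)} :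
    ValidBlocks (p :: q :: bs) ↔ 0 < p.2 ∧ 0 < q.1 ∧ ValidBlocks (q :: bs) := by
  simp only [ValidBlocks, List.dropLast_cons_cons, List.tail_cons, List.mem_cons,
    forall_eq_or_imp, ne_eq, reduceCtorEq, not_false_eq_true, true_and]
  tauto

lemma validBlocks_cons_append {p q : ℕ × ℕ} {bs : List (ℕ × ℕ)} :
    ValidBlocks (p :: (bs ++ [q])) ↔ 0 < p.2 ∧ 0 < q.1 ∧ ∀ r ∈ bs, 0 < r.1 ∧ 0 < r.2 := by
  simp only [ValidBlocks, List.dropLast_cons_append_singleton, List.tail_cons, List.mem_append,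
    List.mem_cons, forall_eq_or_imp, ne_eq, reduceCtorEq, not_false_eq_true, true_and]
  grind

lemma exists_validBlocks_blockWord_eq {w : List ℕ} (hw : IsBinary w) :
    ∃ bs, ValidBlocks bs ∧ blockWord bs = w := by
  induction w with
  | nil => exact ⟨[(0, 0)], validBlocks_singleton _, rfl⟩
  | cons a w ih =>
    obtain ⟨bs, hbs, rfl⟩ := ih fun b hb => hw b (List.mem_cons_of_mem a hb)
    obtain ⟨⟨m, n⟩, rest, rfl⟩ := List.exists_cons_of_ne_nil hbs.1
    rcases hw a List.mem_cons_self with rfl | rfl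
    · refine ⟨(m + 1, n) :: rest, ?_, by simp [blockWord_cons, List.replicate_succ]⟩
      cases rest with
      | nil => exact validBlocks_singleton _
      | cons q rest =>
        obtain ⟨hn, hq, hvalid⟩ := validBlocks_cons_cons.1 hbs
        exact validBlocks_cons_cons.2 ⟨hn, hq, hvalid⟩
    · rcases Nat.eq_zero_or_pos m with rfl | hm
      · refine ⟨(0, n + 1) :: rest, ?_, by simp [blockWord_cons, List.replicate_succ]⟩
        cases rest with
        | nil => exact validBlocks_singleton _
        | cons q rest => exact validBlocks_cons_cons.2 ⟨n.succ_pos, (validBlocks_cons_cons.1 hbs).2⟩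
      · exact ⟨(0, 1) :: (m, n) :: rest, validBlocks_cons_cons.2 ⟨Nat.one_pos, hm, hbs⟩,
          by simp [blockWord_cons]⟩

lemma blocksAux_blockWord {bs : List (ℕ × ℕ)} (hbs : ValidBlocks bs) (hne : blockWord bs ≠ [])
    {fuel : ℕ} (hfuel : (blockWord bs).length ≤ fuel) : blocksAux fuel (blockWord bs) = bs := by
  induction bs generalizing fuel with
  | nil => exact absurd rfl hbs.1
  | cons p rest ih =>
    obtain ⟨m, n⟩ := p
    obtain _ | f := fuel
    · exact absurd (List.eq_nil_of_length_eq_zero (Nat.le_zero.1 hfuel)) hne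
    -- the run of 1s stops at a 2 (or at the end), and the run of 2s at a 1 (or at the end)
    have hrest : (blockWord rest).head? ≠ some 2 := by
      cases rest with
      | nil => simp [blockWord]
      | cons q rest =>
        rw [head?_blockWord_cons_of_pos _ _ (validBlocks_cons_cons.1 hbs).2.1]
        simp
    have hmid : (List.replicate n 2 ++ blockWord rest).head? ≠ some 1 := by
      cases rest with
      | nil => cases n <;> simp [blockWord, List.replicate_succ]
      | cons q rest =>
        obtain ⟨k, rfl⟩ := Nat.exists_eq_succ_of_ne_zero (validBlocks_cons_cons.1 hbs).1.ne'
        simp [List.replicate_succ]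
    have hstep : blocksAux (f + 1) (blockWord ((m, n) :: rest)) =
        (m, n) :: blocksAux f (blockWord rest) := by
      rw [blocksAux.eq_3 _ _ hne, blockWord_cons, List.append_assoc,
        leadCount_replicate_append 1 m hmid, leadCount_replicate_append 2 n hrest]
    rw [hstep]
    cases rest with
    | nil => simp [blockWord, blocksAux_nil]
    | cons q rest =>
      obtain ⟨hn, hq, hvalid⟩ := validBlocks_cons_cons.1 hbs
      refine congrArg _ (ih hvalid ?_ ?_)
      · simp [← List.head?_eq_none_iff, head?_blockWord_cons_of_pos _ _ hq]
      · simp [blockWord_cons] at hfuel ⊢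
        omega

lemma blocks_blockWord {bs : List (ℕ × ℕ)} (hbs : ValidBlocks bs) (hne : blockWord bs ≠ []) :
    blocks (blockWord bs) = bs :=
  blocksAux_blockWord hbs hne le_rfl

def phiBlocks (bs : List (ℕ × ℕ)) : List (ℕ × ℕ) :=
  (match (bs.map Prod.fst).reverse with
    | [] => ([] : List ℕ)
    | [a] => [a]
    | a :: rest => (a - 1) :: (rest.dropLast ++ [rest.getLastD 0 + 1])).zip
    (bs.map Prod.snd)

lemma phi_eq_blockWord_phiBlocks (w : List ℕ) : phi w = blockWord (phiBlocks (blocks w)) := rfl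

lemma phiBlocks_singleton (p : ℕ × ℕ) : phiBlocks [p] = [p] := rfl

lemma phiBlocks_cons_append (m₀ n₀ m n : ℕ) (bs : List (ℕ × ℕ)) :
    phiBlocks ((m₀, n₀) :: (bs ++ [(m, n)])) =
      (m - 1, n₀) :: ((bs.map Prod.fst).reverse.zip (bs.map Prod.snd) ++ [(m₀ + 1, n)]) := by
  obtain ⟨c, cs, hc⟩ :=
    List.exists_cons_of_ne_nil (List.concat_ne_nil m₀ (bs.map Prod.fst).reverse)
  have hrev : (((m₀, n₀) :: (bs ++ [(m, n)])).map Prod.fst).reverse = m :: c :: cs := by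
    simp [← hc]
  unfold phiBlocks
  rw [hrev]
  dsimp only
  rw [← hc, List.dropLast_concat, List.getLastD_concat, List.map_cons, List.map_append,
    List.zip_cons_cons, List.zip_append (by simp)]
  rfl

lemma validBlocks_phiBlocks {bs : List (ℕ × ℕ)} (hbs : ValidBlocks bs) :
    ValidBlocks (phiBlocks bs) := by
  induction bs using List.bidirectionalRec with
  | nil => exact hbs
  | singleton p => exact hbs
  | cons_append p bs q _ =>
    obtain ⟨hp, -, hbs⟩ := validBlocks_cons_append.1 hbs
    rw [phiBlocks_cons_append]
    refine validBlocks_cons_append.2 ⟨hp, Nat.succ_pos _, fun ⟨a, b⟩ hab => ?_⟩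
    obtain ⟨ha, hb⟩ := List.of_mem_zip hab
    simp only [List.mem_reverse, List.mem_map] at ha hb
    obtain ⟨r, hr, rfl⟩ := ha
    obtain ⟨r', hr', rfl⟩ := hb
    exact ⟨(hbs r hr).1, (hbs r' hr').2⟩

lemma blockWord_phiBlocks_ne_nil {bs : List (ℕ × ℕ)} (hbs : ValidBlocks bs)
    (hne : blockWord bs ≠ []) : blockWord (phiBlocks bs) ≠ [] := by
  induction bs using List.bidirectionalRec with
  | nil => exact hne
  | singleton p => exact hne
  | cons_append p bs q _ =>
    obtain ⟨k, hk⟩ := Nat.exists_eq_succ_of_ne_zero (validBlocks_cons_append.1 hbs).1.ne'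
    rw [phiBlocks_cons_append, blockWord_cons, hk]
    simp [List.replicate_succ]

lemma phi2Blocks_eq_psiBlocks_phiBlocks (bs : List (ℕ × ℕ)) :
    phi2Blocks bs = psiBlocks (phiBlocks bs) := by
  induction bs using List.bidirectionalRec with
  | nil => rfl
  | singleton p => simp [phiBlocks_singleton, phi2Blocks, psiBlocks]
  | cons_append p bs q _ =>
    obtain ⟨m₀, n₀⟩ := p
    obtain ⟨m, n⟩ := q
    have hlen : (bs.map Prod.fst).reverse.length = (bs.map Prod.snd).length := by simp
    rw [phiBlocks_cons_append, phi2Blocks, psiBlocks]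
    simp only [List.dropLast_cons_append_singleton, List.getLastD_cons_append_singleton,
      List.tail_cons, List.headD_cons, List.reverse_append, List.reverse_cons, List.reverse_nil,
      List.nil_append, List.flatMap_append, List.flatMap_cons, List.flatMap_nil]
    rw [List.flatMap_zip_fst hlen.le (fun k => 2 :: List.replicate (k - 1) 1),
      List.flatMap_zip_snd hlen.ge (fun k => List.replicate (k - 1) 2 ++ [1]),
      ← List.flatMap_map Prod.snd (fun k => List.replicate (k - 1) 2 ++ [1]),
      ← List.flatMap_map Prod.fst (fun k => List.replicate (k - 1) 1 ++ [2]) bs.reverse,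
      List.map_reverse]
    simp [← List.flatMap_cons_append_singleton]

lemma phiBlocks_eq_self {bs : List (ℕ × ℕ)} (hbs : ValidBlocks bs)
    (h₀ : (bs.map Prod.fst).headD 0 = (bs.map Prod.fst).getLastD 0 - 1)
    (hpal : ∀ i, 1 ≤ i → i ≤ (bs.map Prod.fst).length - 1 - 1 →
      (bs.map Prod.fst).getD i 0 = (bs.map Prod.fst).getD ((bs.map Prod.fst).length - 1 - i) 0) :
    phiBlocks bs = bs := by
  induction bs using List.bidirectionalRec with
  | nil => rfl
  | singleton p => rfl
  | cons_append p bs q _ =>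
    obtain ⟨m₀, n₀⟩ := p
    obtain ⟨m, n⟩ := q
    have hm : 0 < m := (validBlocks_cons_append.1 hbs).2.1
    simp only [List.map_cons, List.map_append, List.map_nil, List.headD_cons,
      List.getLastD_cons_append_singleton] at h₀ hpal
    obtain rfl : m = m₀ + 1 := by omega
    rw [phiBlocks_cons_append, List.reverse_eq_self_of_getD hpal, ← List.zip_of_prod rfl rfl,
      Nat.add_sub_cancel]

lemma phi2_eq_psi_phi {w : List ℕ} (hw : IsBinary w) : Phi2 w = Psi (phi w) := by
  rcases eq_or_ne w [] with rfl | hne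
  · rfl
  obtain ⟨bs, hbs, rfl⟩ := exists_validBlocks_blockWord_eq hw
  rw [Phi2, Psi, phi_eq_blockWord_phiBlocks, blocks_blockWord hbs hne,
    blocks_blockWord (validBlocks_phiBlocks hbs) (blockWord_phiBlocks_ne_nil hbs hne),
    phi2Blocks_eq_psiBlocks_phiBlocks]

theorem stmt_16 :
    (∀ w : List ℕ, IsBinary w → Phi2 w = Psi (phi w)) ∧
      ∀ w : List ℕ, IsBinary w →
        ((blocks w).map Prod.fst).headD 0 =
            ((blocks w).map Prod.fst).getLastD 0 - 1 →
        (∀ i, 1 ≤ i → i ≤ ((blocks w).map Prod.fst).length - 1 - 1 →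
          ((blocks w).map Prod.fst).getD i 0 =
            ((blocks w).map Prod.fst).getD
              (((blocks w).map Prod.fst).length - 1 - i) 0) →
        Psi w = Phi2 w := by
  refine ⟨fun w hw => phi2_eq_psi_phi hw, fun w hw h₀ hpal => ?_⟩
  rcases eq_or_ne w [] with rfl | hne
  · rfl
  obtain ⟨bs, hbs, rfl⟩ := exists_validBlocks_blockWord_eq hw
  rw [blocks_blockWord hbs hne] at h₀ hpal
  have hphi : phi (blockWord bs) = blockWord bs := by
    rw [phi_eq_blockWord_phiBlocks, blocks_blockWord hbs hne, phiBlocks_eq_self hbs h₀ hpal]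
  rw [phi2_eq_psi_phi hw, hphi]
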